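/- Let Λ be a finite simple graph with vertices v_1, …, v_n and n ≥ 3, and let Γ(Λ) be the graph of the explicit construction. If v_i and v_j are distinct vertices of Λ that are not adjacent in Λ, then the pair (v_i, v_j) is a separating intersection of links (SIL-pair) in Γ(Λ); in fact, {a_1, a_2} is the vertex set of a connected component of Γ(Λ) − (lk(v_i) ∩ lk(v_j)) containing neither v_i nor v_j. -/

import Mathlib

open SimpleGraph
open scoped commutatorElement

/-- The set of commutator relations defining the right-angled Artin group of a graph. -/
def raagRels {V : Type} (G : SimpleGraph V) : Set (FreeGroup V) :=
  {r | ∃ v w : V, G.Adj v w ∧ r = ⁅FreeGroup.of v, FreeGroup.of w⁆}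

/-- The right-angled Artin group of a graph `G`. -/
abbrev RAAG {V : Type} (G : SimpleGraph V) : Type := PresentedGroup (raagRels G)

/-- The subgroup of inner automorphisms of a group. -/
def Inn (G : Type*) [Group G] : Subgroup (MulAut G) := (MulAut.conj (G := G)).range

instance Inn.normal (G : Type*) [Group G] : (Inn G).Normal := by
  constructor
  intro x hx φ
  obtain ⟨g, rfl⟩ := hx
  refine ⟨φ g, ?_⟩
  ext h
  simp [MulAut.conj, mul_assoc]

/-- The outer automorphism group of a group. -/
abbrev Out (G : Type*) [Group G] : Type _ := MulAut G ⧸ Inn G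

/-- The group of pure symmetric automorphisms of the right-angled Artin group of `G`:
those automorphisms sending each generator to a conjugate of itself. -/
def PSA {V : Type} (G : SimpleGraph V) : Subgroup (MulAut (RAAG G)) where
  carrier := {φ | ∀ v : V,
    IsConj (PresentedGroup.of (rels := raagRels G) v) (φ (PresentedGroup.of v))}
  one_mem' := fun _ => IsConj.refl _
  mul_mem' := by
    intro φ ψ hφ hψ v
    rw [MulAut.mul_apply]
    exact (hφ v).trans (φ.toMonoidHom.map_isConj (hψ v))
  inv_mem' := by
    intro φ hφ v
    have h := (φ⁻¹ : MulAut (RAAG G)).toMonoidHom.map_isConj (hφ v)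
    simp only [MulEquiv.coe_toMonoidHom] at h
    have h2 : (φ⁻¹ : MulAut (RAAG G)) (φ (PresentedGroup.of v)) = PresentedGroup.of v := by
      simp
    rw [h2] at h
    exact h.symm

/-- The group of pure symmetric outer automorphisms: the image of `PSA` in `Out`. -/
def PSO {V : Type} (G : SimpleGraph V) : Subgroup (Out (RAAG G)) :=
  (PSA G).map (QuotientGroup.mk' (Inn (RAAG G)))

/-- The star of a vertex: the vertex together with its neighbours. -/
def graphStar {V : Type} (G : SimpleGraph V) (v : V) : Set V := insert v (G.neighborSet v)

/-- `IsCompOf G s A` says that `A` is the vertex set of a connected component of the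
induced subgraph of `G` on `s`. -/
def IsCompOf {V : Type} (G : SimpleGraph V) (s : Set V) (A : Set V) : Prop :=
  ∃ a : s, A = {x : V | ∃ hx : x ∈ s, (SimpleGraph.induce s G).Reachable ⟨x, hx⟩ a}

/-- The support graph of `G` at a vertex `v`: vertices are the connected components of
`G - st(v)`, and two distinct components `A`, `B` are adjacent if there is `b ∈ B` such
that `A` is also a connected component of `G - st(b)`, or symmetrically. -/
def SupportGraph {V : Type} (G : SimpleGraph V) (v : V) :
    SimpleGraph {A : Set V // IsCompOf G (graphStar G v)ᶜ A} :=
  SimpleGraph.fromRel (fun A B => ∃ b ∈ B.1, IsCompOf G (graphStar G b)ᶜ A.1)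

/-- A pair of distinct non-adjacent vertices `(v, w)` is a separating intersection of links
if `G - (lk(v) ∩ lk(w))` has a connected component containing neither `v` nor `w`. -/
def SILPair {V : Type} (G : SimpleGraph V) (v w : V) : Prop :=
  v ≠ w ∧ ¬ G.Adj v w ∧
    ∃ A : Set V, IsCompOf G (G.neighborSet v ∩ G.neighborSet w)ᶜ A ∧ v ∉ A ∧ w ∉ A
/-- Vertices of the graph `Γ(Λ)`: the vertices of `Λ` (indexed by `Fin n`, with `v i`
denoting `v_{i+1}`) together with new vertices `a₁, a₂, b₁, b₂, c₁, …, c_n, d₁, d₂`. -/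
inductive GV (n : ℕ) : Type where
  | v (i : Fin n)
  | a1 | a2 | b1 | b2
  | c (i : Fin n)
  | d1 | d2
deriving DecidableEq

/-- The edge relation of the graph `Γ(Λ)` (to be symmetrized by `SimpleGraph.fromRel`). -/
def gammaRel {n : ℕ} (Λ : SimpleGraph (Fin n)) : GV n → GV n → Prop
  | .v i, .v j => Λ.Adj i j
  | .c i, .v j => j = i ∨ (j : ℕ) = ((i : ℕ) + 1) % n
  | .c _, .d1 => True
  | .c _, .d2 => True
  | .d1, .v j => (j : ℕ) = 0
  | .d1, .b1 => True
  | .d2, .v j => (j : ℕ) ≠ 0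
  | .d2, .b2 => True
  | .v _, .b1 => True
  | .v _, .b2 => True
  | .b1, .a1 => True
  | .b2, .a2 => True
  | .a1, .a2 => True
  | _, _ => False

/-- The graph `Γ(Λ)` of the explicit construction. -/
def GammaGraph {n : ℕ} (Λ : SimpleGraph (Fin n)) : SimpleGraph (GV n) :=
  SimpleGraph.fromRel (gammaRel Λ)

/-- Vertices of the graph `Γ'(Λ)`: the vertices of `Λ` (indexed by `Fin n`, with `v i`
denoting `v_{i+1}`) together with new vertices
`a₁, a₂, a₃, b₁, b₂, b₃, c₁, …, c_n, d₁, d₂, d₃`. -/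
inductive GV' (n : ℕ) : Type where
  | v (i : Fin n)
  | a1 | a2 | a3 | b1 | b2 | b3
  | c (i : Fin n)
  | d1 | d2 | d3
deriving DecidableEq

/-- The edge relation of the graph `Γ'(Λ)` (to be symmetrized by `SimpleGraph.fromRel`). -/
def gammaRel' {n : ℕ} (Λ : SimpleGraph (Fin n)) : GV' n → GV' n → Prop
  | .v i, .v j => Λ.Adj i j
  | .c i, .v j => j = i ∨ (j : ℕ) = ((i : ℕ) + 1) % n
  | .c _, .d1 => True
  | .c _, .d2 => True
  | .c _, .d3 => True
  | .d1, .v j => (j : ℕ) = 0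
  | .d1, .b1 => True
  | .d2, .v j => (j : ℕ) = 1
  | .d3, .v j => 2 ≤ (j : ℕ)
  | .d3, .b3 => True
  | .d2, .d3 => True
  | .v _, .b1 => True
  | .v _, .b2 => True
  | .v _, .b3 => True
  | .b1, .a1 => True
  | .b2, .a2 => True
  | .b3, .a3 => True
  | .a1, .a2 => True
  | .a1, .a3 => True
  | .a2, .a3 => True
  | _, _ => False

/-- The graph `Γ'(Λ)` of the second explicit construction. -/
def GammaGraph' {n : ℕ} (Λ : SimpleGraph (Fin n)) : SimpleGraph (GV' n) :=
  SimpleGraph.fromRel (gammaRel' Λ)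

/-!
Every vertex `v k` of `Λ` is adjacent to both `b₁` and `b₂` but to neither `a₁` nor `a₂`.
So deleting `lk(v_i) ∩ lk(v_j)` keeps the edge `a₁a₂` and removes `b₁`, `b₂`, its only other
neighbours, which cuts `{a₁, a₂}` off as a component of its own.
-/

namespace SimpleGraph

variable {V : Type} {G : SimpleGraph V} {s A : Set V}

theorem mem_of_induce_reachable_of_closed
    (hclosed : ∀ x ∈ A, ∀ y ∈ s, G.Adj x y → y ∈ A) {u w : s}
    (h : (G.induce s).Reachable u w) (hu : u.1 ∈ A) : w.1 ∈ A := by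
  obtain ⟨p⟩ := h
  induction p with
  | nil => exact hu
  | cons huv _ ih => exact ih (hclosed _ hu _ (Subtype.prop _) huv)

theorem isCompOf_pair {a b : V} (hab : G.Adj a b) (ha : a ∈ s) (hb : b ∈ s)
    (hclosed : ∀ x ∈ ({a, b} : Set V), ∀ y ∈ s, G.Adj x y → y ∈ ({a, b} : Set V)) :
    IsCompOf G s {a, b} := by
  refine ⟨⟨a, ha⟩, Set.ext fun x => ⟨?_, ?_⟩⟩
  · rintro (rfl | rfl)
    · exact ⟨ha, Reachable.refl _⟩
    · exact ⟨hb, (show (G.induce s).Adj ⟨a, ha⟩ ⟨x, hb⟩ from hab).reachable.symm⟩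
  · rintro ⟨hx, hr⟩
    exact mem_of_induce_reachable_of_closed hclosed hr.symm (Or.inl rfl)

end SimpleGraph

namespace GammaGraph

variable {n : ℕ} {Λ : SimpleGraph (Fin n)}

@[simp]
theorem adj_v_v {i j : Fin n} : (GammaGraph Λ).Adj (.v i) (.v j) ↔ Λ.Adj i j := by
  simp only [GammaGraph, fromRel_adj, gammaRel, ne_eq, GV.v.injEq, Λ.adj_comm j i, or_self]
  exact ⟨And.right, fun h => ⟨Λ.ne_of_adj h, h⟩⟩

theorem adj_a1 {x : GV n} : (GammaGraph Λ).Adj .a1 x ↔ x = .a2 ∨ x = .b1 := by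
  cases x <;> simp [GammaGraph, gammaRel]

theorem adj_a2 {x : GV n} : (GammaGraph Λ).Adj .a2 x ↔ x = .a1 ∨ x = .b2 := by
  cases x <;> simp [GammaGraph, gammaRel]

theorem adj_v_b1 (k : Fin n) : (GammaGraph Λ).Adj (.v k) .b1 := by
  simp [GammaGraph, gammaRel]

theorem adj_v_b2 (k : Fin n) : (GammaGraph Λ).Adj (.v k) .b2 := by
  simp [GammaGraph, gammaRel]

theorem not_adj_v_a1 (k : Fin n) : ¬ (GammaGraph Λ).Adj (.v k) .a1 := by
  simp [GammaGraph, gammaRel]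

theorem not_adj_v_a2 (k : Fin n) : ¬ (GammaGraph Λ).Adj (.v k) .a2 := by
  simp [GammaGraph, gammaRel]

theorem isCompOf_a1_a2 (i j : Fin n) :
    IsCompOf (GammaGraph Λ)
      ((GammaGraph Λ).neighborSet (.v i) ∩ (GammaGraph Λ).neighborSet (.v j))ᶜ {.a1, .a2} := by
  set s := ((GammaGraph Λ).neighborSet (.v i) ∩ (GammaGraph Λ).neighborSet (.v j))ᶜ
  have hb1 : GV.b1 ∉ s := fun h => h ⟨adj_v_b1 i, adj_v_b1 j⟩
  have hb2 : GV.b2 ∉ s := fun h => h ⟨adj_v_b2 i, adj_v_b2 j⟩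
  refine isCompOf_pair (adj_a1.2 (Or.inl rfl)) (fun h => not_adj_v_a1 i h.1)
    (fun h => not_adj_v_a2 i h.1) ?_
  rintro x (rfl | rfl) y hy hxy
  · rcases adj_a1.1 hxy with rfl | rfl
    exacts [Or.inr rfl, absurd hy hb1]
  · rcases adj_a2.1 hxy with rfl | rfl
    exacts [Or.inl rfl, absurd hy hb2]

end GammaGraph

theorem gammaGraph_silPair_general
    (n : ℕ) (Λ : SimpleGraph (Fin n)) (i j : Fin n)
    (hij : i ≠ j) (hadj : ¬ Λ.Adj i j) :
    SILPair (GammaGraph Λ) (GV.v i) (GV.v j) ∧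
    IsCompOf (GammaGraph Λ)
      ((GammaGraph Λ).neighborSet (GV.v i) ∩ (GammaGraph Λ).neighborSet (GV.v j))ᶜ
      {GV.a1, GV.a2} ∧
    GV.v i ∉ ({GV.a1, GV.a2} : Set (GV n)) ∧
    GV.v j ∉ ({GV.a1, GV.a2} : Set (GV n)) := by
  have hcomp := GammaGraph.isCompOf_a1_a2 (Λ := Λ) i j
  have hvi : GV.v i ∉ ({GV.a1, GV.a2} : Set (GV n)) := by simp
  have hvj : GV.v j ∉ ({GV.a1, GV.a2} : Set (GV n)) := by simp
  exact ⟨⟨by simpa using hij, by simpa using hadj, _, hcomp, hvi, hvj⟩, hcomp, hvi, hvj⟩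

/-- If `v_i ≠ v_j` are non-adjacent in `Λ`, then `(v_i, v_j)` is a SIL-pair
in `Γ(Λ)`; in fact `{a₁, a₂}` is the vertex set of a connected component of
`Γ(Λ) - (lk(v_i) ∩ lk(v_j))` containing neither `v_i` nor `v_j`. -/
theorem gammaGraph_silPair
    (n : ℕ) (hn : 3 ≤ n) (Λ : SimpleGraph (Fin n)) (i j : Fin n)
    (hij : i ≠ j) (hadj : ¬ Λ.Adj i j) :
    SILPair (GammaGraph Λ) (GV.v i) (GV.v j) ∧
    IsCompOf (GammaGraph Λ)
      ((GammaGraph Λ).neighborSet (GV.v i) ∩ (GammaGraph Λ).neighborSet (GV.v j))ᶜ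
      {GV.a1, GV.a2} ∧
    GV.v i ∉ ({GV.a1, GV.a2} : Set (GV n)) ∧
    GV.v j ∉ ({GV.a1, GV.a2} : Set (GV n)) :=
  gammaGraph_silPair_general n Λ i j hij hadj
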